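/- Let n ≥ 3 be an integer and s, t ∈ ℂ. Working in the Laurent polynomial ring ℂ[q, q⁻¹] with q the canonical unit, the family of identities l(n+1−j, n+1−i, n−k; q,s,t) = l(i,j,k; q,s,t), for all i, j with 1 ≤ i, j ≤ n, i ≠ j, and all k with 1 ≤ k ≤ n−1, holds if and only if s = t. (This is the computational content of the statement that the quantum Lie algebra (sl_n)_h(p), p = t/s, admits the Dynkin diagram automorphism τ(X_{ij}) = −X_{n+1−j,n+1−i}, τ(H_k) = H_{n−k} iff p = 1.) -/

import Mathlib

open LaurentPolynomial

/-!
Write `l(i,j,k) = a(k,i)·(s + t q^n) - b(k,j)·(s + t q^(-n))` (`slnL_eq`). The reflection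
`(i,j,k) ↦ (n+1-j, n+1-i, n-k)` exchanges the two coefficient families up to units:
`a(n-k, n+1-j) = -q^(-n) b(k,j)` and `b(n-k, n+1-i) = -q^n a(k,i)`. Hence the reflected
constant minus the original one is `(s - t)·(a(k,i)(q^n - 1) - b(k,j)(q^(-n) - 1))`, which
vanishes when `s = t`; for `i = k = 1`, `j = n` (where `n ≥ 3` kills `b(1,n)`) it is
`(s - t)(q^n - 1)`, whose constant term is `t - s`.
-/

/-- The canonical unit `q = T 1` of the Laurent polynomial ring `ℂ[q, q⁻¹]`. -/
noncomputable def qUnit : (LaurentPolynomial ℂ)ˣ := (LaurentPolynomial.isUnit_T (R := ℂ) 1).unit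

/-- The structure constants `l(i,j,k; q,s,t)` of the quantum Lie algebra `(sl_n)_h(t/s)`,
appearing in `[H_k, X_{ij}]_h = l_{ij}(H_k)·X_{ij}`, computed in the Laurent polynomial
ring `ℂ[q, q⁻¹]` with `s, t ∈ ℂ` regarded as constants. -/
noncomputable def slnL (s t : ℂ) (n i j k : ℤ) : LaurentPolynomial ℂ :=
  ((qUnit ^ (1 - k) : (LaurentPolynomial ℂ)ˣ) * (if k = i then (1 : LaurentPolynomial ℂ) else 0)
      - (qUnit ^ (-1 - k) : (LaurentPolynomial ℂ)ˣ)
        * (if k = i - 1 then (1 : LaurentPolynomial ℂ) else 0))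
      * (LaurentPolynomial.C s + LaurentPolynomial.C t * (qUnit ^ n : (LaurentPolynomial ℂ)ˣ))
    - ((qUnit ^ (k - 1) : (LaurentPolynomial ℂ)ˣ) * (if k = j then (1 : LaurentPolynomial ℂ) else 0)
      - (qUnit ^ (k + 1) : (LaurentPolynomial ℂ)ˣ)
        * (if k = j - 1 then (1 : LaurentPolynomial ℂ) else 0))
      * (LaurentPolynomial.C s + LaurentPolynomial.C t * (qUnit ^ (-n) : (LaurentPolynomial ℂ)ˣ))

lemma val_qUnit_inv : ((qUnit⁻¹ : (LaurentPolynomial ℂ)ˣ) : LaurentPolynomial ℂ) = T (-1) :=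
  Units.inv_eq_of_mul_eq_one_right <| by
    rw [qUnit, IsUnit.unit_spec, ← T_add, add_neg_cancel, T_zero]

lemma val_qUnit_zpow (m : ℤ) :
    ((qUnit ^ m : (LaurentPolynomial ℂ)ˣ) : LaurentPolynomial ℂ) = T m := by
  induction m using Int.induction_on with
  | zero => simp [T_zero]
  | succ m ih => rw [zpow_add_one, Units.val_mul, ih, qUnit, IsUnit.unit_spec, ← T_add]
  | pred m ih => rw [zpow_sub_one, Units.val_mul, ih, val_qUnit_inv, ← T_add, sub_eq_add_neg]

noncomputable def slnRowCoeff (k i : ℤ) : LaurentPolynomial ℂ :=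
  T (1 - k) * (if k = i then 1 else 0) - T (-1 - k) * (if k = i - 1 then 1 else 0)

noncomputable def slnColCoeff (k j : ℤ) : LaurentPolynomial ℂ :=
  T (k - 1) * (if k = j then 1 else 0) - T (k + 1) * (if k = j - 1 then 1 else 0)

lemma slnL_eq (s t : ℂ) (n i j k : ℤ) :
    slnL s t n i j k =
      slnRowCoeff k i * (C s + C t * T n) - slnColCoeff k j * (C s + C t * T (-n)) := by
  simp only [slnL, slnRowCoeff, slnColCoeff, val_qUnit_zpow]

lemma slnRowCoeff_reflect (n k j : ℤ) :
    slnRowCoeff (n - k) (n + 1 - j) = -(T (-n) * slnColCoeff k j) := by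
  simp only [slnRowCoeff, slnColCoeff, show n - k = n + 1 - j ↔ k = j - 1 by omega,
    show n - k = n + 1 - j - 1 ↔ k = j by omega, show 1 - (n - k) = -n + (k + 1) by ring,
    show -1 - (n - k) = -n + (k - 1) by ring, T_add]
  ring

lemma slnColCoeff_reflect (n k i : ℤ) :
    slnColCoeff (n - k) (n + 1 - i) = -(T n * slnRowCoeff k i) := by
  simp only [slnRowCoeff, slnColCoeff, show n - k = n + 1 - i ↔ k = i - 1 by omega,
    show n - k = n + 1 - i - 1 ↔ k = i by omega, show n - k - 1 = n + (-1 - k) by ring,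
    show n - k + 1 = n + (1 - k) by ring, T_add]
  ring

lemma slnL_reflect_sub (s t : ℂ) (n i j k : ℤ) :
    slnL s t n (n + 1 - j) (n + 1 - i) (n - k) - slnL s t n i j k =
      C (s - t) * (slnRowCoeff k i * (T n - 1) - slnColCoeff k j * (T (-n) - 1)) := by
  have hT : (T n : LaurentPolynomial ℂ) * T (-n) = 1 := by rw [← T_add, add_neg_cancel, T_zero]
  rw [slnL_eq, slnL_eq, slnRowCoeff_reflect, slnColCoeff_reflect, map_sub]
  linear_combination C t * (slnRowCoeff k i - slnColCoeff k j) * hT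

lemma eq_zero_of_C_mul_T_sub_one_eq_zero {R : Type*} [Ring R] {a : R} {n : ℤ} (hn : n ≠ 0)
    (h : C a * (T n - 1) = 0) : a = 0 := by
  have hCT : (C a * T n).coeff 0 = 0 := Finsupp.notMem_support_iff.mp fun h0 =>
    hn (Finset.mem_singleton.mp (support_C_mul_T a n h0)).symm
  simpa [mul_sub, hCT] using congrArg (fun p => p.coeff 0) h

lemma slnRowCoeff_self (i : ℤ) : slnRowCoeff i i = T (1 - i) := by
  simp [slnRowCoeff, show i ≠ i - 1 by omega]

lemma slnColCoeff_of_lt {k j : ℤ} (h : k + 1 < j) : slnColCoeff k j = 0 := by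
  simp [slnColCoeff, show k ≠ j by omega, show k ≠ j - 1 by omega]

/-- for an integer `n ≥ 3` and `s, t ∈ ℂ`, the family of identities
`l(n+1-j, n+1-i, n-k; q,s,t) = l(i,j,k; q,s,t)` in `ℂ[q, q⁻¹]`, for all `1 ≤ i, j ≤ n` with
`i ≠ j` and all `1 ≤ k ≤ n-1`, holds if and only if `s = t`.  (This is the computational
content of the statement that `(sl_n)_h(p)`, `p = t/s`, admits the Dynkin diagram
automorphism `τ(X_{ij}) = -X_{n+1-j,n+1-i}`, `τ(H_k) = H_{n-k}` iff `p = 1`.) -/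
theorem slnL_tau_invariant_iff (n : ℤ) (hn : 3 ≤ n) (s t : ℂ) :
    (∀ i j k : ℤ, 1 ≤ i → i ≤ n → 1 ≤ j → j ≤ n → i ≠ j → 1 ≤ k → k ≤ n - 1 →
        slnL s t n (n + 1 - j) (n + 1 - i) (n - k) = slnL s t n i j k) ↔ s = t := by
  refine ⟨fun h => ?_, ?_⟩
  · have h1n := sub_eq_zero.mpr (h 1 n 1 le_rfl (by omega) (by omega) le_rfl (by omega) le_rfl
      (by omega))
    rw [slnL_reflect_sub, slnRowCoeff_self, slnColCoeff_of_lt (by omega), sub_self, T_zero,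
      one_mul, zero_mul, sub_zero] at h1n
    exact sub_eq_zero.mp (eq_zero_of_C_mul_T_sub_one_eq_zero (by omega) h1n)
  · rintro rfl i j k - - - - - - -
    rw [← sub_eq_zero, slnL_reflect_sub, sub_self, map_zero, zero_mul]
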